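/- arXiv:math/0004085 — 2 statements merged into one kernel-verified Lean document; each statement's English description precedes it below -/
import Mathlib

section
/- Fix a real parameter a with a < 1 and a ≠ 0, and set E(n) = (1-a)^(-n/2) for real n. The function C_6 defined in the context tends, as real n tends to 2 with n ≠ 2, to the limit ((a^2 - 9a + 6)·ln(1-a))/(12a^2) + ((3a - 2)·(a - 2))/(8a·(1-a)). (This is the paper's dimension n = 2 value of the coefficient C_6 in the heat invariant E_2 of the nonminimal operator on a 2-dimensional manifold with torsion.) -/
/-!
Write the numerator `N = c6Numerator a` of `C_6` as `N(n) = E(n) P(n) + Q(n)`. At `n = 2` one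
has `E(2) = (1 - a)⁻¹`, `P(2) = -8 (1 - a) (a² - 9a + 6)` and `Q(2) = 8 (a² - 9a + 6)`, so
`N(2) = 0` and the limit is `N'(2) / (6a² · 2 · 4)`. Differentiating, the factor `1 - a` of `P(2)` cancels against `E(2)`, so
`N'(2) = 4 (a² - 9a + 6) log (1 - a) + 6a (3a - 2)(a - 2) / (1 - a)`.
-/

open Filter Topology Real

theorem HasDerivAt.tendsto_div_sub_mul {f g : ℝ → ℝ} {f' x : ℝ} (hf : HasDerivAt f f' x)
    (hfx : f x = 0) (hg : ContinuousAt g x) (hgx : g x ≠ 0) :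
    Tendsto (fun y => f y / ((y - x) * g y)) (𝓝[≠] x) (𝓝 (f' / g x)) := by
  have hslope : Tendsto (fun y => f y / (y - x)) (𝓝[≠] x) (𝓝 f') :=
    (hasDerivAt_iff_tendsto_slope.mp hf).congr fun y => by rw [slope_def_field, hfx, sub_zero]
  exact (hslope.div (hg.tendsto.mono_left nhdsWithin_le_nhds) hgx).congr fun y =>
    (div_mul_eq_div_div _ _ _).symm

theorem hasDerivAt_quadratic (p q r x : ℝ) :
    HasDerivAt (fun n : ℝ => p * n ^ 2 + q * n + r) (2 * p * x + q) x := by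
  have h := (((hasDerivAt_pow 2 x).const_mul p).add ((hasDerivAt_id x).const_mul q)).add_const r
  refine h.congr_deriv ?_
  ring

noncomputable def c6Numerator (a n : ℝ) : ℝ :=
  (1 - a) ^ (-(n / 2)) * (a^3*n^2 + 2*a^3*n - a^2*n^2 - 20*a^2*n - 36*a^2 + 12*a*n + 96*a - 48)
    + (a^2*n^2 - 16*a^2*n + 36*a^2 + 12*a*n - 96*a + 48)

theorem rpow_neg_two_div_two (b : ℝ) : b ^ (-((2 : ℝ) / 2)) = b⁻¹ := by
  norm_num [Real.rpow_neg_one]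

theorem c6Numerator_two {a : ℝ} (ha : a ≠ 1) : c6Numerator a 2 = 0 := by
  have h : 1 - a ≠ 0 := sub_ne_zero.mpr ha.symm
  rw [c6Numerator, rpow_neg_two_div_two]
  field_simp
  ring

theorem hasDerivAt_c6Numerator_two {a : ℝ} (ha : a < 1) :
    HasDerivAt (c6Numerator a)
      (4 * (a^2 - 9*a + 6) * log (1 - a) + 6 * a * (3*a - 2) * (a - 2) / (1 - a)) 2 := by
  have hpos : 0 < 1 - a := sub_pos.mpr ha
  have hE : HasDerivAt (fun n : ℝ => (1 - a) ^ (-(n / 2)))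
      ((1 - a) ^ (-((2 : ℝ) / 2)) * log (1 - a) * (-(1 / 2))) 2 :=
    (hasStrictDerivAt_const_rpow hpos _).hasDerivAt.comp 2 ((hasDerivAt_id 2).div_const 2).neg
  have hP := hasDerivAt_quadratic (a^3 - a^2) (2*a^3 - 20*a^2 + 12*a) (-36*a^2 + 96*a - 48) 2
  have hQ := hasDerivAt_quadratic (a^2) (-16*a^2 + 12*a) (36*a^2 - 96*a + 48) 2
  refine (((hE.mul hP).add hQ).congr_deriv ?_).congr_of_eventuallyEq
    (Eventually.of_forall fun n => ?_)
  · rw [rpow_neg_two_div_two]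
    field_simp
    ring
  · simp only [c6Numerator, Pi.add_apply, Pi.mul_apply]
    ring

theorem stmt_9 (a : ℝ) (ha1 : a < 1) (ha0 : a ≠ 0) :
    Filter.Tendsto
      (fun n : ℝ =>
        ((1 - a) ^ (-(n / 2)) * (a^3*n^2 + 2*a^3*n - a^2*n^2 - 20*a^2*n - 36*a^2 + 12*a*n + 96*a - 48) + a^2*n^2 - 16*a^2*n + 36*a^2 + 12*a*n - 96*a + 48) / (6*a^2*(n-2)*n*(n+2)))
      (nhdsWithin (2 : ℝ) {(2 : ℝ)}ᶜ)
      (nhds (((a^2 - 9*a + 6) * Real.log (1 - a)) / (12*a^2) + ((3*a - 2)*(a - 2)) / (8*a*(1-a)))) := by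
  have hlim := (hasDerivAt_c6Numerator_two ha1).tendsto_div_sub_mul (c6Numerator_two ha1.ne)
    (g := fun n => 6 * a^2 * n * (n + 2)) (by fun_prop) (by positivity)
  have h1a : 1 - a ≠ 0 := sub_ne_zero.mpr ha1.ne'
  convert hlim using 2
  · simp only [c6Numerator]
    ring
  · field_simp
    ring
end

section
/- Fix a real parameter a with a < 1 and a ≠ 0, and set E(n) = (1-a)^(-n/2) for real n. The function C_14 defined in the context tends, as real n tends to 2 with n ≠ 2, to the limit ((a^2 - 4a + 2)·ln(1-a))/(4a^2) - (3a - 2)/(4a). (This is the paper's dimension n = 2 value of the coefficient C_14 in the heat invariant E_2 of the nonminimal operator on a 2-dimensional manifold with torsion.) -/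
/-!
The numerator `N(n)` of `C_14(n)` vanishes at `n = 2`, while the denominator is `(n - 2)` times
`2a²n(n + 2)`, which is `16a² ≠ 0` at `n = 2`. Hence the limit is the difference quotient limit
`N'(2) / (16a²)`, and differentiating `(1 - a)^(-n/2)` is what produces the `log (1 - a)` term.
-/

open Filter Topology Real

theorem tendsto_div_sub_mul_of_hasDerivAt {f g : ℝ → ℝ} {x D : ℝ} (hf : HasDerivAt f D x)
    (hfx : f x = 0) (hg : ContinuousAt g x) (hgx : g x ≠ 0) :
    Tendsto (fun y => f y / ((y - x) * g y)) (𝓝[≠] x) (𝓝 (D / g x)) := by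
  refine ((hasDerivAt_iff_tendsto_slope.mp hf).div (hg.tendsto.mono_left nhdsWithin_le_nhds)
    hgx).congr fun y => ?_
  rw [Pi.div_apply, slope_def_field, hfx, sub_zero, div_div]

noncomputable def c14Numerator (a n : ℝ) : ℝ :=
  (1-a) * (1 - a) ^ (-(n / 2)) * (-a^2*n^2 - 2*a^2*n + 8*a*n + 16*a - 16)
    - a^2*n^2 - 2*a^2*n + 16*a^2 - 32*a + 16

theorem c14Numerator_two {a : ℝ} (ha : a ≠ 1) : c14Numerator a 2 = 0 := by
  have h : (1 - a) ≠ 0 := sub_ne_zero.mpr ha.symm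
  norm_num [c14Numerator, rpow_neg_one]
  field_simp
  ring

theorem hasDerivAt_c14Numerator_two {a : ℝ} (ha : a < 1) :
    HasDerivAt (c14Numerator a) ((4*a^2 - 16*a + 8) * log (1 - a) - 12*a^2 + 8*a) 2 := by
  have hb : 0 < 1 - a := sub_pos.mpr ha
  have hE := (((hasDerivAt_id' (2 : ℝ)).div_const 2).fun_neg).const_rpow hb
  have hP := ((((hasDerivAt_pow 2 (2 : ℝ)).const_mul (-a^2)).fun_sub
    ((hasDerivAt_id' 2).const_mul (2*a^2))).fun_add
    ((hasDerivAt_id' 2).const_mul (8*a))).add_const (16*a) |>.sub_const 16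
  have hN := (((((hE.const_mul (1-a)).fun_mul hP).fun_sub
    ((hasDerivAt_pow 2 (2 : ℝ)).const_mul (a^2))).fun_sub
    ((hasDerivAt_id' 2).const_mul (2*a^2))).add_const (16*a^2)).sub_const (32*a) |>.add_const 16
  refine hN.congr_deriv ?_
  norm_num [rpow_neg_one]
  field_simp
  ring

theorem stmt_16 (a : ℝ) (ha1 : a < 1) (ha0 : a ≠ 0) :
    Filter.Tendsto
      (fun n : ℝ =>
        ((1-a) * (1 - a) ^ (-(n / 2)) * (-a^2*n^2 - 2*a^2*n + 8*a*n + 16*a - 16) - a^2*n^2 - 2*a^2*n + 16*a^2 - 32*a + 16) / (2*a^2*(n-2)*n*(n+2)))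
      (nhdsWithin (2 : ℝ) {(2 : ℝ)}ᶜ)
      (nhds (((a^2 - 4*a + 2) * Real.log (1 - a)) / (4*a^2) - (3*a - 2) / (4*a))) := by
  have hlim := tendsto_div_sub_mul_of_hasDerivAt (hasDerivAt_c14Numerator_two ha1)
    (c14Numerator_two ha1.ne) (g := fun n => 2*a^2*n*(n+2)) (by fun_prop)
    (by positivity)
  convert hlim using 2 with n
  · rw [c14Numerator]; ring
  · field_simp; ring
end
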